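/- Let (A, X) ~ RDPG(F) with sparsity factor ρ_n, and let u_j denote the j-th column of U_P. Then asymptotically almost surely max_{1≤j≤d} ‖(A − P) u_j‖_∞ = O(log n); i.e., there is a fixed constant C > 0 such that a.a.s. for every j ∈ [d] and every index i ∈ [n], |Σ_k (A_{ik} − P_{ik}) u_{jk}| ≤ C log n. -/

import Mathlib

open MeasureTheory ProbabilityTheory Matrix Filter
open scoped ENNReal NNReal BigOperators Topology

noncomputable section

/-- Euclidean norm of a finitely indexed real vector. -/
def vecNorm {κ : Type*} [Fintype κ] (v : κ → ℝ) : ℝ := Real.sqrt (∑ c, v c ^ 2)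

/-- Frobenius norm of a real matrix. -/
def frobNorm {ι κ : Type*} [Fintype ι] [Fintype κ] (M : Matrix ι κ ℝ) : ℝ :=
  Real.sqrt (∑ i, ∑ j, M i j ^ 2)

/-- Spectral (operator) norm of a real matrix. -/
def specNorm {ι κ : Type*} [Fintype ι] [Fintype κ] (M : Matrix ι κ ℝ) : ℝ :=
  sSup {r : ℝ | ∃ v : κ → ℝ, vecNorm v = 1 ∧ r = vecNorm (M *ᵥ v)}

/-- A real square matrix is orthogonal. -/
def IsOrthogonalMat {κ : Type*} [Fintype κ] [DecidableEq κ] (W : Matrix κ κ ℝ) : Prop :=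
  Wᵀ * W = 1

/-- A symmetric hollow 0-1 matrix. -/
def IsAdjMat {ι : Type*} (A : Matrix ι ι ℝ) : Prop :=
  (∀ i j, A i j = A j i) ∧ (∀ i, A i i = 0) ∧ (∀ i j, A i j = 0 ∨ A i j = 1)

/-- `U` has orthonormal columns which are eigenvectors of `M` for the eigenvalues `Λ`,
and these eigenvalues are largest in magnitude:  any eigenvector of `M` orthogonal to the
columns of `U` has eigenvalue of magnitude at most `min_j |Λ j|`. -/
def IsTopSpectral {ι κ : Type*} [Fintype ι] [Fintype κ] [DecidableEq κ]
    (M : Matrix ι ι ℝ) (U : Matrix ι κ ℝ) (Λ : κ → ℝ) : Prop :=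
  Uᵀ * U = 1 ∧
  (∀ j, M *ᵥ (fun i => U i j) = Λ j • (fun i => U i j)) ∧
  (∀ (lam : ℝ) (v : ι → ℝ), v ≠ 0 → M *ᵥ v = lam • v →
    (∀ j, (fun i => U i j) ⬝ᵥ v = 0) → ∀ j, |lam| ≤ |Λ j|)

/-- `Xh` is an adjacency spectral embedding of the symmetric matrix `M`, i.e.
`Xh = U_M S_M^{1/2}` where `S_M` is the diagonal matrix of the largest-in-magnitude
eigenvalues of `M` and `U_M` has the corresponding orthonormal eigenvectors as columns. -/
def IsASE {ι κ : Type*} [Fintype ι] [Fintype κ] [DecidableEq κ]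
    (M : Matrix ι ι ℝ) (Xh : ι → κ → ℝ) : Prop :=
  ∃ (U : Matrix ι κ ℝ) (Λ : κ → ℝ), IsTopSpectral M U Λ ∧
    ∀ i j, Xh i j = U i j * Real.sqrt (Λ j)

/-- Spectral decomposition `P = U diag(Λ) Uᵀ` of a rank-`|κ|` positive semidefinite
matrix `P`, where `U` has orthonormal columns and the `Λ j` are the nonzero
(hence positive) eigenvalues of `P`. -/
def IsRankFact {ι κ : Type*} [Fintype ι] [Fintype κ] [DecidableEq κ]
    (P : Matrix ι ι ℝ) (U : Matrix ι κ ℝ) (Λ : κ → ℝ) : Prop :=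
  Uᵀ * U = 1 ∧ P = U * Matrix.diagonal Λ * Uᵀ ∧ ∀ j, 0 < Λ j

/-- Singular value decomposition `M = W₁ diag(σ) W₂ᵀ` of a square matrix. -/
def IsSVDFact {κ : Type*} [Fintype κ] [DecidableEq κ]
    (M W₁ : Matrix κ κ ℝ) (σ : κ → ℝ) (W₂ : Matrix κ κ ℝ) : Prop :=
  IsOrthogonalMat W₁ ∧ IsOrthogonalMat W₂ ∧ (∀ j, 0 ≤ σ j) ∧ M = W₁ * Matrix.diagonal σ * W₂ᵀ

/-- A sequence of events `E n` occurs asymptotically almost surely: for any fixed `c > 0`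
there is `n₀ = n₀(c)` such that for all `n > n₀` and all `η` with `n^{-c} < η < 1/2`,
`P(E n) ≥ 1 - η`. -/
def AAS {Ω : Type*} [MeasurableSpace Ω] (μ : Measure Ω) (E : ℕ → Set Ω) : Prop :=
  ∀ c : ℝ, 0 < c → ∃ n₀ : ℕ, ∀ n : ℕ, n₀ < n → ∀ η : ℝ,
    (n : ℝ) ^ (-c) < η → η < 1 / 2 → 1 - ENNReal.ofReal η ≤ μ (E n)

/-- A sequence of random graphs `(X, A) ∼ RDPG(F)` with sparsity factors `ρ n`:
the rows of `X` are i.i.d. with distribution `F` (a distribution on a subset of `ℝ^d`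
whose pairwise dot products lie in `[0,1]`), and, conditionally on `X`, the adjacency
matrix `A` is symmetric and hollow with independent entries
`A i j ∼ Bernoulli (ρ n * ⟨X i, X j⟩)` for `i < j`. -/
structure RDPGModel (Ω : Type) [MeasurableSpace Ω] (μ : Measure Ω) (d : ℕ) : Type where
  F : Measure (Fin d → ℝ)
  ρ : ℕ → ℝ
  X : (n : ℕ) → Ω → Fin n → Fin d → ℝ
  A : (n : ℕ) → Ω → Fin n → Fin n → ℝ
  μ_prob : IsProbabilityMeasure μ
  F_prob : IsProbabilityMeasure F
  F_inner : ∀ᵐ x ∂F, ∀ᵐ y ∂F, 0 ≤ x ⬝ᵥ y ∧ x ⬝ᵥ y ≤ 1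
  ρ_pos : ∀ n, 0 < ρ n
  ρ_le_one : ∀ n, ρ n ≤ 1
  X_meas : ∀ n v, Measurable fun ω => X n ω v
  A_meas : ∀ n, Measurable fun ω => A n ω
  X_indep : ∀ n, iIndepFun (fun v ω => X n ω v) μ
  X_law : ∀ n v, μ.map (fun ω => X n ω v) = F
  A_adj : ∀ n ω, IsAdjMat (Matrix.of (A n ω))
  A_cond : ∀ n (a : Fin n → Fin n → ℝ), IsAdjMat (Matrix.of a) →
    ∀ S : Set (Fin n → Fin d → ℝ), MeasurableSet S →
      μ {ω | X n ω ∈ S ∧ A n ω = a} =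
        ∫⁻ ω in {ω | X n ω ∈ S},
          ∏ p ∈ Finset.univ.filter (fun p : Fin n × Fin n => p.1 < p.2),
            ENNReal.ofReal (if a p.1 p.2 = 1 then ρ n * (X n ω p.1 ⬝ᵥ X n ω p.2)
              else 1 - ρ n * (X n ω p.1 ⬝ᵥ X n ω p.2)) ∂μ

/-- The second moment matrix `Δ = E[X₁ X₁ᵀ]` of the latent position distribution. -/
def RDPGModel.secondMoment {Ω : Type} [MeasurableSpace Ω] {μ : Measure Ω} {d : ℕ}
    (M : RDPGModel Ω μ d) : Matrix (Fin d) (Fin d) ℝ :=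
  Matrix.of fun a b => ∫ x, x a * x b ∂M.F

/-- The edge probability matrix `P = ρ_n X Xᵀ`. -/
def RDPGModel.P {Ω : Type} [MeasurableSpace Ω] {μ : Measure Ω} {d : ℕ}
    (M : RDPGModel Ω μ d) (n : ℕ) (ω : Ω) : Matrix (Fin n) (Fin n) ℝ :=
  Matrix.of fun i j => M.ρ n * (M.X n ω i ⬝ᵥ M.X n ω j)

namespace RCEB

open Finset

variable {n d : ℕ}

abbrev EdgeT (n : ℕ) := {p : Fin n × Fin n // p.1 < p.2}

variable {n : ℕ}

/-- symmetric hollow 0-1 matrix built from booleans on edges -/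
def aMat (b : EdgeT n → Bool) : Fin n → Fin n → ℝ := fun i j =>
  if h : i < j then (if b ⟨(i, j), h⟩ then 1 else 0)
  else if h' : j < i then (if b ⟨(j, i), h'⟩ then 1 else 0) else 0

lemma aMat_symm (b : EdgeT n → Bool) (i j : Fin n) : aMat b i j = aMat b j i := by
  unfold aMat
  rcases lt_trichotomy i j with h | h | h
  · rw [dif_pos h, dif_neg (asymm h), dif_pos h]
  · subst h; rfl
  · rw [dif_neg (asymm h), dif_pos h, dif_pos h]

lemma aMat_diag (b : EdgeT n → Bool) (i : Fin n) : aMat b i i = 0 := by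
  unfold aMat
  rw [dif_neg (lt_irrefl i), dif_neg (lt_irrefl i)]

lemma aMat_edge (b : EdgeT n → Bool) (e : EdgeT n) :
    aMat b e.1.1 e.1.2 = if b e then 1 else 0 := by
  unfold aMat
  rw [dif_pos e.2]

lemma aMat_eq_one_iff (b : EdgeT n → Bool) (e : EdgeT n) :
    aMat b e.1.1 e.1.2 = 1 ↔ b e = true := by
  rw [aMat_edge]
  cases h : b e <;> simp

def qE (pr : Fin n → Fin n → ℝ) (b : EdgeT n → Bool) (e : EdgeT n) : ℝ :=
  if b e then pr e.1.1 e.1.2 else 1 - pr e.1.1 e.1.2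

lemma qE_nonneg {pr : Fin n → Fin n → ℝ} (h0 : ∀ i j, 0 ≤ pr i j) (h1 : ∀ i j, pr i j ≤ 1)
    (b : EdgeT n → Bool) (e : EdgeT n) : 0 ≤ qE pr b e := by
  unfold qE; split <;> [exact h0 _ _; linarith [h1 e.1.1 e.1.2]]

def touch (i : Fin n) : Finset (EdgeT n) :=
  univ.filter (fun e => e.1.1 = i ∨ e.1.2 = i)

def oth (i : Fin n) (e : EdgeT n) : Fin n := if e.1.1 = i then e.1.2 else e.1.1

lemma oth_ne {i : Fin n} {e : EdgeT n} (he : e ∈ touch i) : oth i e ≠ i := by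
  have h2 := e.2
  unfold oth
  split
  · rintro rfl; omega
  · simp only [touch, mem_filter] at he
    rcases he.2 with h | h
    · omega
    · rintro rfl; omega

lemma prod_touch (i : Fin n) (g : Fin n → ℝ) :
    ∏ e ∈ touch i, g (oth i e) = ∏ k ∈ univ.erase i, g k := by
  refine Finset.prod_bij (fun e _ => oth i e) ?_ ?_ ?_ ?_
  · intro e he
    exact Finset.mem_erase.mpr ⟨oth_ne he, Finset.mem_univ _⟩
  · intro e1 h1 e2 h2 heq
    simp only [touch, mem_filter, mem_univ, true_and] at h1 h2
    have g1 := e1.2; have g2 := e2.2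
    replace heq : oth i e1 = oth i e2 := heq
    unfold oth at heq
    refine Subtype.ext (Prod.ext ?_ ?_) <;>
      (rcases h1 with h1 | h1 <;> rcases h2 with h2 | h2 <;>
        split_ifs at heq <;> omega)
  · intro k hk
    rw [Finset.mem_erase] at hk
    rcases lt_or_gt_of_ne hk.1 with h | h
    · exact ⟨⟨(k, i), h⟩, by simp [touch], by unfold oth; simp; omega⟩
    · exact ⟨⟨(i, k), h⟩, by simp [touch], by unfold oth; simp⟩
  · intro e he; rfl

lemma aMat_oth (b : EdgeT n → Bool) {i : Fin n} {e : EdgeT n} (he : e ∈ touch i) :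
    aMat b i (oth i e) = if b e then 1 else 0 := by
  simp only [touch, mem_filter, mem_univ, true_and] at he
  have h2 := e.2
  unfold oth
  split
  · rename_i h1
    rw [← aMat_edge b e]
    congr 1 <;> omega
  · rename_i h1
    have h3 : e.1.2 = i := by tauto
    rw [aMat_symm, ← aMat_edge b e]
    congr 1
    omega

lemma pr_oth {pr : Fin n → Fin n → ℝ} (hsym : ∀ i j, pr i j = pr j i)
    {i : Fin n} {e : EdgeT n} (he : e ∈ touch i) :
    pr e.1.1 e.1.2 = pr i (oth i e) := by
  simp only [touch, mem_filter, mem_univ, true_and] at he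
  unfold oth
  split
  · rename_i h; rw [h]
  · rename_i h
    have h3 : e.1.2 = i := by tauto
    rw [h3, hsym]

/-- convexity bound for exp on [-1,1] -/
lemma exp_le_lin (s u : ℝ) (h1 : -1 ≤ u) (h2 : u ≤ 1) :
    Real.exp (s * u) ≤ ((1 - u) * Real.exp (-s) + (1 + u) * Real.exp s) / 2 := by
  have key := convexOn_exp.2 (Set.mem_univ (-s)) (Set.mem_univ s)
    (by linarith : (0:ℝ) ≤ (1 - u) / 2) (by linarith : (0:ℝ) ≤ (1 + u) / 2) (by ring)
  simp only [smul_eq_mul] at key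
  have : (1 - u) / 2 * (-s) + (1 + u) / 2 * s = s * u := by ring
  rw [this] at key
  calc Real.exp (s * u) ≤ (1 - u) / 2 * Real.exp (-s) + (1 + u) / 2 * Real.exp s := key
    _ = ((1 - u) * Real.exp (-s) + (1 + u) * Real.exp s) / 2 := by ring

/-- Hoeffding-type mgf bound for a single centered Bernoulli -/
lemma bern_mgf (p s : ℝ) (h0 : 0 ≤ p) (h1 : p ≤ 1) :
    (1 - p) * Real.exp (s * (0 - p)) + p * Real.exp (s * (1 - p)) ≤ Real.exp (s ^ 2 / 2) := by
  have b1 := exp_le_lin s (0 - p) (by linarith) (by linarith)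
  have b2 := exp_le_lin s (1 - p) (by linarith) (by linarith)
  have e1 : 0 ≤ Real.exp (-s) := (Real.exp_pos _).le
  have e2 : 0 ≤ Real.exp s := (Real.exp_pos _).le
  have hcosh : (1 - p) * Real.exp (s * (0 - p)) + p * Real.exp (s * (1 - p)) ≤ Real.cosh s := by
    rw [Real.cosh_eq]
    have hp1 : 0 ≤ 1 - p := by linarith
    calc (1 - p) * Real.exp (s * (0 - p)) + p * Real.exp (s * (1 - p))
        ≤ (1 - p) * (((1 - (0 - p)) * Real.exp (-s) + (1 + (0 - p)) * Real.exp s) / 2)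
          + p * (((1 - (1 - p)) * Real.exp (-s) + (1 + (1 - p)) * Real.exp s) / 2) := by
          exact add_le_add (mul_le_mul_of_nonneg_left b1 hp1) (mul_le_mul_of_nonneg_left b2 h0)
      _ = (Real.exp s + Real.exp (-s)) / 2 := by ring
  exact hcosh.trans (Real.cosh_le_exp_half_sq s)


set_option maxHeartbeats 1000000 in
lemma mgf_bound (pr : Fin n → Fin n → ℝ) (hsym : ∀ i j, pr i j = pr j i)
    (h0 : ∀ i j, 0 ≤ pr i j) (h1 : ∀ i j, pr i j ≤ 1)
    (i : Fin n) (v : Fin n → ℝ) (hv : ∑ k, v k ^ 2 ≤ 1) (lam : ℝ) :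
    ∑ b : EdgeT n → Bool, (∏ e, qE pr b e) *
      Real.exp (lam * ∑ k ∈ univ.erase i, (aMat b i k - pr i k) * v k)
      ≤ Real.exp (lam ^ 2 / 2) := by
  classical
  -- the combined per-edge factor
  set Φ : EdgeT n → Bool → ℝ := fun e y =>
    (if y then pr e.1.1 e.1.2 else 1 - pr e.1.1 e.1.2) *
      (if e ∈ touch i then
        Real.exp (lam * ((((if y then (1:ℝ) else 0)) - pr i (oth i e)) * v (oth i e)))
      else 1) with hΦ
  have hfact : ∀ b : EdgeT n → Bool,
      (∏ e, qE pr b e) *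
        Real.exp (lam * ∑ k ∈ univ.erase i, (aMat b i k - pr i k) * v k)
        = ∏ e, Φ e (b e) := by
    intro b
    have hexp : Real.exp (lam * ∑ k ∈ univ.erase i, (aMat b i k - pr i k) * v k)
        = ∏ k ∈ univ.erase i, Real.exp (lam * ((aMat b i k - pr i k) * v k)) := by
      rw [← Real.exp_sum, Finset.mul_sum]
    have hmove : ∏ k ∈ univ.erase i, Real.exp (lam * ((aMat b i k - pr i k) * v k))
        = ∏ e ∈ touch i,
            Real.exp (lam * (((if b e then (1:ℝ) else 0) - pr i (oth i e)) * v (oth i e))) := by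
      rw [← prod_touch i (fun k => Real.exp (lam * ((aMat b i k - pr i k) * v k)))]
      refine Finset.prod_congr rfl fun e he => ?_
      rw [aMat_oth b he]
    have hfilter : ∏ e ∈ touch i,
        Real.exp (lam * (((if b e then (1:ℝ) else 0) - pr i (oth i e)) * v (oth i e)))
        = ∏ e : EdgeT n, (if e ∈ touch i then
            Real.exp (lam * (((if b e then (1:ℝ) else 0) - pr i (oth i e)) * v (oth i e)))
          else 1) := by
      rw [Finset.prod_ite_mem univ (touch i)
        (fun e => Real.exp (lam * (((if b e then (1:ℝ) else 0) - pr i (oth i e)) * v (oth i e))))]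
      rw [Finset.univ_inter]
    rw [hexp, hmove, hfilter, ← Finset.prod_mul_distrib]
    exact Finset.prod_congr rfl fun e _ => rfl
  have hswap : ∑ b : EdgeT n → Bool, ∏ e, Φ e (b e)
      = ∏ e : EdgeT n, (Φ e true + Φ e false) := by
    have := Finset.prod_univ_sum (κ := fun _ : EdgeT n => Bool)
      (t := fun _ => (Finset.univ : Finset Bool)) (f := fun e y => Φ e y)
    rw [Fintype.piFinset_univ] at this
    rw [← this]
    refine Finset.prod_congr rfl fun e _ => ?_
    simp [Fintype.sum_bool]
  have hedge : ∀ e : EdgeT n, Φ e true + Φ e false ≤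
      (if e ∈ touch i then Real.exp ((lam * v (oth i e)) ^ 2 / 2) else 1) := by
    intro e
    by_cases he : e ∈ touch i
    · simp only [hΦ, if_pos he, if_true, if_false]
      have hpe : pr e.1.1 e.1.2 = pr i (oth i e) := pr_oth hsym he
      rw [hpe]
      set p := pr i (oth i e)
      set w := v (oth i e)
      have hb := bern_mgf p (lam * w) (h0 _ _) (h1 _ _)
      calc p * Real.exp (lam * ((1 - p) * w)) + (1 - p) * Real.exp (lam * ((0 - p) * w))
          = (1 - p) * Real.exp ((lam * w) * (0 - p)) + p * Real.exp ((lam * w) * (1 - p)) := by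
            ring_nf
        _ ≤ Real.exp ((lam * w) ^ 2 / 2) := hb
    · simp only [hΦ, if_neg he, mul_one]
      norm_num
  have hΦnonneg : ∀ e : EdgeT n, ∀ y, 0 ≤ Φ e y := by
    intro e y
    simp only [hΦ]
    apply mul_nonneg
    · split
      · exact h0 _ _
      · linarith [h1 e.1.1 e.1.2]
    · split
      · exact (Real.exp_pos _).le
      · norm_num
  have hprod : ∏ e : EdgeT n, (Φ e true + Φ e false) ≤
      ∏ e : EdgeT n, (if e ∈ touch i then Real.exp ((lam * v (oth i e)) ^ 2 / 2) else 1) := by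
    apply Finset.prod_le_prod
    · intro e _
      exact add_nonneg (hΦnonneg e true) (hΦnonneg e false)
    · intro e _
      exact hedge e
  have hfinal : ∏ e : EdgeT n, (if e ∈ touch i then
      Real.exp ((lam * v (oth i e)) ^ 2 / 2) else 1) ≤ Real.exp (lam ^ 2 / 2) := by
    have h1' : ∏ e : EdgeT n, (if e ∈ touch i then
        Real.exp ((lam * v (oth i e)) ^ 2 / 2) else 1)
        = ∏ e ∈ touch i, Real.exp ((lam * v (oth i e)) ^ 2 / 2) := by
      rw [Finset.prod_ite_mem univ (touch i)
        (fun e => Real.exp ((lam * v (oth i e)) ^ 2 / 2)), Finset.univ_inter]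
    rw [h1', prod_touch i (fun k => Real.exp ((lam * v k) ^ 2 / 2)), ← Real.exp_sum]
    apply Real.exp_le_exp.mpr
    have hsub : ∑ k ∈ univ.erase i, (lam * v k) ^ 2 / 2 ≤ ∑ k, (lam * v k) ^ 2 / 2 := by
      apply Finset.sum_le_sum_of_subset_of_nonneg (Finset.subset_univ _)
      intro k _ _
      positivity
    have heq2 : ∑ k, (lam * v k) ^ 2 / 2 = lam ^ 2 / 2 * ∑ k, v k ^ 2 := by
      rw [Finset.mul_sum]
      exact Finset.sum_congr rfl fun k _ => by ring
    have : lam ^ 2 / 2 * ∑ k, v k ^ 2 ≤ lam ^ 2 / 2 := by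
      nlinarith [sq_nonneg lam]
    linarith
  calc ∑ b : EdgeT n → Bool, (∏ e, qE pr b e) *
        Real.exp (lam * ∑ k ∈ univ.erase i, (aMat b i k - pr i k) * v k)
      = ∑ b : EdgeT n → Bool, ∏ e, Φ e (b e) := Finset.sum_congr rfl fun b _ => hfact b
    _ = ∏ e : EdgeT n, (Φ e true + Φ e false) := hswap
    _ ≤ _ := hprod.trans hfinal

set_option maxHeartbeats 1000000 in
lemma chernoff_row (pr : Fin n → Fin n → ℝ) (hsym : ∀ i j, pr i j = pr j i)
    (h0 : ∀ i j, 0 ≤ pr i j) (h1 : ∀ i j, pr i j ≤ 1)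
    (i : Fin n) (v : Fin n → ℝ) (hv : ∑ k, v k ^ 2 ≤ 1) (lam : ℝ) (hlam : 0 ≤ lam) :
    ∑ b : EdgeT n → Bool,
      (if lam + 1 < |∑ k, (aMat b i k - pr i k) * v k| then ∏ e, qE pr b e else 0)
      ≤ 2 * Real.exp (-lam ^ 2 / 2) := by
  classical
  set S : (EdgeT n → Bool) → ℝ := fun b => ∑ k ∈ univ.erase i, (aMat b i k - pr i k) * v k
    with hS
  have hvi : |v i| ≤ 1 := by
    have h2 : v i ^ 2 ≤ 1 := by
      have : v i ^ 2 ≤ ∑ k, v k ^ 2 :=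
        Finset.single_le_sum (fun k _ => sq_nonneg (v k)) (Finset.mem_univ i)
      linarith
    nlinarith [sq_abs (v i), abs_nonneg (v i)]
  have hW : ∀ b : EdgeT n → Bool, 0 ≤ ∏ e, qE pr b e :=
    fun b => Finset.prod_nonneg fun e _ => qE_nonneg h0 h1 b e
  have hptwise : ∀ b : EdgeT n → Bool,
      (if lam + 1 < |∑ k, (aMat b i k - pr i k) * v k| then ∏ e, qE pr b e else 0)
      ≤ (∏ e, qE pr b e) * Real.exp (lam * S b) * Real.exp (-lam ^ 2)
          + (∏ e, qE pr b e) * Real.exp (-lam * S b) * Real.exp (-lam ^ 2) := by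
    intro b
    have hterm : (0:ℝ) ≤ (∏ e, qE pr b e) * Real.exp (lam * S b) * Real.exp (-lam ^ 2)
          + (∏ e, qE pr b e) * Real.exp (-lam * S b) * Real.exp (-lam ^ 2) := by
      have := hW b
      positivity
    split
    · rename_i hev
      have hsplit : S b + (aMat b i i - pr i i) * v i = ∑ k, (aMat b i k - pr i k) * v k :=
        Finset.sum_erase_add univ (fun k => (aMat b i k - pr i k) * v k) (Finset.mem_univ i)
      have hdiag : aMat b i i = 0 := aMat_diag b i
      have hSbig : lam < |S b| := by
        have habs : |∑ k, (aMat b i k - pr i k) * v k| ≤ |S b| + |(aMat b i i - pr i i) * v i| := by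
          rw [← hsplit]; exact abs_add_le _ _
        have hsmall : |(aMat b i i - pr i i) * v i| ≤ 1 := by
          rw [hdiag, abs_mul]
          have h3 : |(0:ℝ) - pr i i| ≤ 1 := by
            rw [abs_sub_comm, sub_zero, abs_of_nonneg (h0 i i)]; exact h1 i i
          calc |(0:ℝ) - pr i i| * |v i| ≤ 1 * 1 :=
              mul_le_mul h3 hvi (abs_nonneg _) zero_le_one
            _ = 1 := by ring
        linarith
      have hone : (1:ℝ) ≤ Real.exp (lam * S b) * Real.exp (-lam ^ 2)
          + Real.exp (-lam * S b) * Real.exp (-lam ^ 2) := by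
        rcases lt_abs.mp hSbig with hgt | hgt
        · have e1 : (1:ℝ) ≤ Real.exp (lam * S b) * Real.exp (-lam ^ 2) := by
            rw [← Real.exp_add, ← Real.exp_zero]
            apply Real.exp_le_exp.mpr
            nlinarith
          have e2 : (0:ℝ) ≤ Real.exp (-lam * S b) * Real.exp (-lam ^ 2) := by positivity
          linarith
        · have e1 : (1:ℝ) ≤ Real.exp (-lam * S b) * Real.exp (-lam ^ 2) := by
            rw [← Real.exp_add, ← Real.exp_zero]
            apply Real.exp_le_exp.mpr
            nlinarith
          have e2 : (0:ℝ) ≤ Real.exp (lam * S b) * Real.exp (-lam ^ 2) := by positivity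
          linarith
      calc (∏ e, qE pr b e) = (∏ e, qE pr b e) * 1 := by ring
        _ ≤ (∏ e, qE pr b e) * (Real.exp (lam * S b) * Real.exp (-lam ^ 2)
              + Real.exp (-lam * S b) * Real.exp (-lam ^ 2)) :=
            mul_le_mul_of_nonneg_left hone (hW b)
        _ = (∏ e, qE pr b e) * Real.exp (lam * S b) * Real.exp (-lam ^ 2)
              + (∏ e, qE pr b e) * Real.exp (-lam * S b) * Real.exp (-lam ^ 2) := by ring
    · exact hterm
  have hsum := Finset.sum_le_sum (s := (univ : Finset (EdgeT n → Bool))) (fun b _ => hptwise b)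
  have hsplit2 : ∑ b : EdgeT n → Bool,
      ((∏ e, qE pr b e) * Real.exp (lam * S b) * Real.exp (-lam ^ 2)
        + (∏ e, qE pr b e) * Real.exp (-lam * S b) * Real.exp (-lam ^ 2))
      = (∑ b : EdgeT n → Bool, (∏ e, qE pr b e) * Real.exp (lam * S b)) * Real.exp (-lam ^ 2)
        + (∑ b : EdgeT n → Bool, (∏ e, qE pr b e) * Real.exp (-lam * S b)) * Real.exp (-lam ^ 2) := by
    rw [Finset.sum_add_distrib, Finset.sum_mul, Finset.sum_mul]
  have hm1 := mgf_bound pr hsym h0 h1 i v hv lam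
  have hm2 := mgf_bound pr hsym h0 h1 i v hv (-lam)
  have hm2' : ∑ b : EdgeT n → Bool, (∏ e, qE pr b e) * Real.exp (-lam * S b)
      ≤ Real.exp (lam ^ 2 / 2) := by
    have : (-lam) ^ 2 = lam ^ 2 := by ring
    rw [← this]
    exact hm2
  have hm1' : ∑ b : EdgeT n → Bool, (∏ e, qE pr b e) * Real.exp (lam * S b)
      ≤ Real.exp (lam ^ 2 / 2) := hm1
  have hexp : (0:ℝ) ≤ Real.exp (-lam ^ 2) := (Real.exp_pos _).le
  calc ∑ b : EdgeT n → Bool,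
      (if lam + 1 < |∑ k, (aMat b i k - pr i k) * v k| then ∏ e, qE pr b e else 0)
      ≤ (∑ b : EdgeT n → Bool, (∏ e, qE pr b e) * Real.exp (lam * S b)) * Real.exp (-lam ^ 2)
        + (∑ b : EdgeT n → Bool, (∏ e, qE pr b e) * Real.exp (-lam * S b)) * Real.exp (-lam ^ 2) := by
        rw [← hsplit2]; exact hsum
    _ ≤ Real.exp (lam ^ 2 / 2) * Real.exp (-lam ^ 2)
        + Real.exp (lam ^ 2 / 2) * Real.exp (-lam ^ 2) := by
        gcongr
    _ = 2 * Real.exp (lam ^ 2 / 2 + -lam ^ 2) := by rw [Real.exp_add]; ring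
    _ = 2 * Real.exp (-lam ^ 2 / 2) := by congr 1; ring
  

lemma transpose_eq_conjTranspose {ι κ : Type*} (A : Matrix ι κ ℝ) : Aᴴ = Aᵀ := by
  ext i j
  simp [Matrix.conjTranspose_apply]

/-- det of Gram matrix nonzero & projection domination, given a rank factorization -/
lemma keyLA (xm : Matrix (Fin n) (Fin d) ℝ) (ρ : ℝ)
    (U : Matrix (Fin n) (Fin d) ℝ) (Λ : Fin d → ℝ)
    (hU : Uᵀ * U = 1) (hP : ρ • (xm * xmᵀ) = U * Matrix.diagonal Λ * Uᵀ)
    (hΛ : ∀ j, Λ j ≠ 0) :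
    (xmᵀ * xm).det ≠ 0 ∧
    ∀ (j : Fin d) (r : Fin n → ℝ),
      (r ⬝ᵥ (fun k => U k j)) ^ 2 ≤ r ⬝ᵥ ((xm * (xmᵀ * xm)⁻¹ * xmᵀ) *ᵥ r) := by
  classical
  set G : Matrix (Fin d) (Fin d) ℝ := xmᵀ * xm with hG
  set D' : Matrix (Fin d) (Fin d) ℝ := Matrix.diagonal (fun j => (Λ j)⁻¹) with hD'
  have hDD' : Matrix.diagonal Λ * D' = 1 := by
    rw [hD', Matrix.diagonal_mul_diagonal]
    have : (fun j => Λ j * (Λ j)⁻¹) = fun _ => (1:ℝ) := by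
      funext j; exact mul_inv_cancel₀ (hΛ j)
    rw [this, Matrix.diagonal_one]
  set M : Matrix (Fin d) (Fin d) ℝ := ρ • (xmᵀ * (U * D')) with hM
  have hxmM : xm * M = U := by
    rw [hM, Matrix.mul_smul, ← Matrix.mul_assoc, ← Matrix.smul_mul, hP]
    simp only [Matrix.mul_assoc]
    rw [← Matrix.mul_assoc Uᵀ U D', hU, Matrix.one_mul, hDD', Matrix.mul_one]
  have hMGM : Mᵀ * G * M = 1 := by
    have h2 : Mᵀ * G * M = (xm * M)ᵀ * (xm * M) := by
      rw [Matrix.transpose_mul, hG]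
      simp only [Matrix.mul_assoc]
    rw [h2, hxmM, hU]
  have hdet : G.det ≠ 0 := by
    intro h0
    have := congrArg Matrix.det hMGM
    rw [Matrix.det_mul, Matrix.det_mul, h0, Matrix.det_one] at this
    simp at this
  have hGu : IsUnit G.det := isUnit_iff_ne_zero.mpr hdet
  set Pim : Matrix (Fin n) (Fin n) ℝ := xm * G⁻¹ * xmᵀ with hPim
  have hPimU : Pim * U = U := by
    rw [← hxmM, hPim]
    simp only [Matrix.mul_assoc]
    rw [← Matrix.mul_assoc xmᵀ xm M, ← hG, ← Matrix.mul_assoc G⁻¹ G M,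
      Matrix.nonsing_inv_mul G hGu, Matrix.one_mul]
  have hGT : Gᵀ = G := by rw [hG, Matrix.transpose_mul, Matrix.transpose_transpose]
  have hPimT : Pimᵀ = Pim := by
    rw [hPim, Matrix.transpose_mul, Matrix.transpose_mul, Matrix.transpose_transpose,
      Matrix.transpose_nonsing_inv, hGT, Matrix.mul_assoc]
  have hPimPim : Pim * Pim = Pim := by
    rw [hPim]
    simp only [Matrix.mul_assoc]
    rw [← Matrix.mul_assoc xmᵀ xm (G⁻¹ * xmᵀ), ← hG, ← Matrix.mul_assoc G⁻¹ G (G⁻¹ * xmᵀ),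
      Matrix.nonsing_inv_mul G hGu, Matrix.one_mul]
  refine ⟨hdet, fun j r => ?_⟩
  set u : Fin n → ℝ := fun k => U k j with hu
  have hunorm : u ⬝ᵥ u = 1 := by
    have := Matrix.ext_iff.mpr hU j j
    rw [Matrix.mul_apply, Matrix.one_apply_eq] at this
    rw [hu, dotProduct]
    convert this using 1
    rfl
  have hPimu : Pim *ᵥ u = u := by
    funext i
    have := Matrix.ext_iff.mpr hPimU i j
    rw [Matrix.mul_apply] at this
    rw [Matrix.mulVec, dotProduct]
    exact this
  set w : Fin n → ℝ := Pim *ᵥ r with hw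
  have hsymm_vec : r ᵥ* Pim = Pim *ᵥ r := by
    rw [← hPimT, Matrix.vecMul_transpose]
    rw [hPimT]
  have hru : r ⬝ᵥ u = w ⬝ᵥ u := by
    conv_lhs => rw [← hPimu]
    rw [Matrix.dotProduct_mulVec, hsymm_vec, hw]
  have hww : w ⬝ᵥ w = r ⬝ᵥ (Pim *ᵥ r) := by
    rw [hw]
    calc (Pim *ᵥ r) ⬝ᵥ (Pim *ᵥ r) = ((Pim *ᵥ r) ᵥ* Pim) ⬝ᵥ r := by rw [Matrix.dotProduct_mulVec]
      _ = (Pim *ᵥ (Pim *ᵥ r)) ⬝ᵥ r := by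
          rw [← hPimT, Matrix.vecMul_transpose, hPimT]
      _ = ((Pim * Pim) *ᵥ r) ⬝ᵥ r := by rw [Matrix.mulVec_mulVec]
      _ = (Pim *ᵥ r) ⬝ᵥ r := by rw [hPimPim]
      _ = r ⬝ᵥ (Pim *ᵥ r) := dotProduct_comm _ _
  have hCS : (w ⬝ᵥ u) ^ 2 ≤ (w ⬝ᵥ w) * (u ⬝ᵥ u) := by
    simpa [dotProduct, pow_two] using
      Finset.sum_mul_sq_le_sq_mul_sq (Finset.univ : Finset (Fin n)) w u
  rw [hru]
  calc (w ⬝ᵥ u) ^ 2 ≤ (w ⬝ᵥ w) * (u ⬝ᵥ u) := hCS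
    _ = r ⬝ᵥ (Pim *ᵥ r) := by rw [hww, hunorm, mul_one]
    _ = r ⬝ᵥ ((xm * G⁻¹ * xmᵀ) *ᵥ r) := by rw [← hPim]

/-- orthonormal basis of the column space, via the p.s.d. square root -/
lemma basisLA (xm : Matrix (Fin n) (Fin d) ℝ) (hdet : (xmᵀ * xm).det ≠ 0) :
    ∃ V : Matrix (Fin n) (Fin d) ℝ, Vᵀ * V = 1 ∧ V * Vᵀ = xm * (xmᵀ * xm)⁻¹ * xmᵀ := by
  classical
  have hpsd : (xmᵀ * xm).PosSemidef := by
    have := Matrix.posSemidef_conjTranspose_mul_self xm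
    rwa [transpose_eq_conjTranspose] at this
  set G : Matrix (Fin d) (Fin d) ℝ := xmᵀ * xm with hG
  obtain ⟨S, hS2, hSsym⟩ : ∃ S : Matrix (Fin d) (Fin d) ℝ, S * S = G ∧ Sᵀ = S := by
    open scoped MatrixOrder in
    refine ⟨CFC.sqrt G, CFC.sqrt_mul_sqrt_self G hpsd.nonneg, ?_⟩
    open scoped MatrixOrder in
    have h : (CFC.sqrt G)ᴴ = CFC.sqrt G := (CFC.sqrt_nonneg G).posSemidef.1
    rwa [transpose_eq_conjTranspose (CFC.sqrt G)] at h
  have hSdet : S.det ≠ 0 := by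
    intro h0
    have : G.det = S.det * S.det := by rw [← hS2, Matrix.det_mul]
    rw [h0, mul_zero] at this
    exact hdet this
  have hSu : IsUnit S.det := isUnit_iff_ne_zero.mpr hSdet
  refine ⟨xm * S⁻¹, ?_, ?_⟩
  · have hiT : (S⁻¹)ᵀ = S⁻¹ := by rw [Matrix.transpose_nonsing_inv, hSsym]
    rw [Matrix.transpose_mul, hiT]
    simp only [Matrix.mul_assoc]
    rw [← Matrix.mul_assoc xmᵀ xm S⁻¹, ← hG, ← hS2]
    simp only [Matrix.mul_assoc]
    rw [Matrix.mul_nonsing_inv S hSu, Matrix.mul_one, Matrix.nonsing_inv_mul S hSu]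
  · have hiT : (S⁻¹)ᵀ = S⁻¹ := by rw [Matrix.transpose_nonsing_inv, hSsym]
    have hinv : S⁻¹ * S⁻¹ = G⁻¹ := by
      rw [← hS2, Matrix.mul_inv_rev]
    rw [Matrix.transpose_mul, hiT]
    simp only [Matrix.mul_assoc]
    rw [← Matrix.mul_assoc S⁻¹ S⁻¹ xmᵀ, hinv]

/-- quadratic form decomposition via the orthonormal columns -/
lemma quad_decomp (V : Matrix (Fin n) (Fin d) ℝ) (r : Fin n → ℝ) :
    r ⬝ᵥ ((V * Vᵀ) *ᵥ r) = ∑ l, (∑ k, V k l * r k) ^ 2 := by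
  rw [← Matrix.mulVec_mulVec, Matrix.dotProduct_mulVec]
  have h1 : r ᵥ* V = Vᵀ *ᵥ r := by
    rw [← Matrix.transpose_transpose V, Matrix.vecMul_transpose, Matrix.transpose_transpose]
  rw [h1]
  rw [dotProduct]
  refine Finset.sum_congr rfl fun l _ => ?_
  have h2 : (Vᵀ *ᵥ r) l = ∑ k, V k l * r k := by
    rw [Matrix.mulVec, dotProduct]
    exact Finset.sum_congr rfl fun k _ => by rw [Matrix.transpose_apply]
  rw [h2, pow_two]

lemma colV_norm (V : Matrix (Fin n) (Fin d) ℝ) (hV : Vᵀ * V = 1) (l : Fin d) :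
    ∑ k, V k l ^ 2 = 1 := by
  have := Matrix.ext_iff.mpr hV l l
  rw [Matrix.mul_apply, Matrix.one_apply_eq] at this
  rw [← this]
  exact Finset.sum_congr rfl fun k _ => by rw [Matrix.transpose_apply]; ring


def prF (ρ : ℝ) (x : Fin n → Fin d → ℝ) : Fin n → Fin n → ℝ := fun i j => ρ * (x i ⬝ᵥ x j)

def xmat (x : Fin n → Fin d → ℝ) : Matrix (Fin n) (Fin d) ℝ := Matrix.of x

def rrow (ρ : ℝ) (a : Fin n → Fin n → ℝ) (x : Fin n → Fin d → ℝ) (i : Fin n) : Fin n → ℝ :=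
  fun k => a i k - ρ * (x i ⬝ᵥ x k)

def Qval (ρ : ℝ) (a : Fin n → Fin n → ℝ) (x : Fin n → Fin d → ℝ) (i : Fin n) : ℝ :=
  rrow ρ a x i ⬝ᵥ ((xmat x * ((xmat x)ᵀ * xmat x)⁻¹ * (xmat x)ᵀ) *ᵥ rrow ρ a x i)

def Dgood (n d : ℕ) : Set (Fin n → Fin d → ℝ) :=
  {x | ∀ i j, 0 ≤ x i ⬝ᵥ x j ∧ x i ⬝ᵥ x j ≤ 1}

def Tset (d : ℕ) (ρ s : ℝ) (b : EdgeT n → Bool) : Set (Fin n → Fin d → ℝ) :=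
  {x | x ∈ Dgood n d ∧ ((xmat x)ᵀ * xmat x).det ≠ 0 ∧ ∃ i, s < Qval ρ (aMat b) x i}

section Measurability

lemma measurable_entry (i : Fin n) (l : Fin d) :
    Measurable fun x : Fin n → Fin d → ℝ => x i l :=
  (measurable_pi_apply l).comp (measurable_pi_apply i)

lemma measurable_dot (i j : Fin n) :
    Measurable fun x : Fin n → Fin d → ℝ => x i ⬝ᵥ x j := by
  simp only [dotProduct]
  exact Finset.measurable_sum _ fun l _ => (measurable_entry i l).mul (measurable_entry j l)

lemma measurable_det {α : Type*} [MeasurableSpace α] {m : ℕ} {f : α → Matrix (Fin m) (Fin m) ℝ}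
    (hf : ∀ i j, Measurable fun a => f a i j) : Measurable fun a => (f a).det := by
  have h : (fun a => (f a).det)
      = fun a => ∑ σ : Equiv.Perm (Fin m), ((Equiv.Perm.sign σ : ℤ) : ℝ) * ∏ i, f a (σ i) i := by
    funext a
    rw [Matrix.det_apply]
    exact Finset.sum_congr rfl fun σ _ => by rw [Units.smul_def, zsmul_eq_mul]
  rw [h]
  exact Finset.measurable_sum _ fun σ _ =>
    ((Finset.measurable_prod _ fun i _ => hf (σ i) i).const_mul _)

lemma measurable_G (a' : Fin d) (b' : Fin d) :
    Measurable fun x : Fin n → Fin d → ℝ => ((xmat x)ᵀ * xmat x) a' b' := by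
  simp only [Matrix.mul_apply, Matrix.transpose_apply, xmat, Matrix.of_apply]
  exact Finset.measurable_sum _ fun k _ => (measurable_entry k a').mul (measurable_entry k b')

lemma measurable_Gdet : Measurable fun x : Fin n → Fin d → ℝ => ((xmat x)ᵀ * xmat x).det :=
  measurable_det measurable_G

lemma measurable_Ginv (a' b' : Fin d) :
    Measurable fun x : Fin n → Fin d → ℝ => ((xmat x)ᵀ * xmat x)⁻¹ a' b' := by
  have h : (fun x : Fin n → Fin d → ℝ => ((xmat x)ᵀ * xmat x)⁻¹ a' b')
      = fun x => (((xmat x)ᵀ * xmat x).det)⁻¹ * ((xmat x)ᵀ * xmat x).adjugate a' b' := by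
    funext x
    rw [Matrix.inv_def, Matrix.smul_apply, smul_eq_mul, Ring.inverse_eq_inv']
  rw [h]
  apply Measurable.mul
  · exact measurable_Gdet.inv
  · have h2 : (fun x : Fin n → Fin d → ℝ => ((xmat x)ᵀ * xmat x).adjugate a' b')
        = fun x => (((xmat x)ᵀ * xmat x).updateRow b' (Pi.single a' 1)).det := by
      funext x; rw [Matrix.adjugate_apply]
    rw [h2]
    apply measurable_det
    intro i j
    by_cases hib : i = b'
    · subst hib
      simp only [Matrix.updateRow_self]
      exact measurable_const
    · have : (fun x : Fin n → Fin d → ℝ =>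
          (((xmat x)ᵀ * xmat x).updateRow b' (Pi.single a' 1)) i j)
          = fun x => ((xmat x)ᵀ * xmat x) i j := by
        funext x; rw [Matrix.updateRow_ne hib]
      rw [this]
      exact measurable_G i j

lemma measurable_rrow (ρ : ℝ) (a : Fin n → Fin n → ℝ) (i k : Fin n) :
    Measurable fun x : Fin n → Fin d → ℝ => rrow ρ a x i k := by
  unfold rrow
  exact measurable_const.sub ((measurable_dot i k).const_mul ρ)

lemma measurable_Pim (k k' : Fin n) :
    Measurable fun x : Fin n → Fin d → ℝ =>
      (xmat x * ((xmat x)ᵀ * xmat x)⁻¹ * (xmat x)ᵀ) k k' := by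
  simp only [Matrix.mul_apply, Matrix.transpose_apply, xmat, Matrix.of_apply]
  exact Finset.measurable_sum _ fun c _ =>
    (Finset.measurable_sum _ fun e _ =>
      (measurable_entry k e).mul (measurable_Ginv e c)).mul (measurable_entry k' c)

lemma measurable_Qval (ρ : ℝ) (a : Fin n → Fin n → ℝ) (i : Fin n) :
    Measurable fun x : Fin n → Fin d → ℝ => Qval ρ a x i := by
  unfold Qval
  simp only [dotProduct, Matrix.mulVec]
  exact Finset.measurable_sum _ fun k _ => (measurable_rrow ρ a i k).mul
    (Finset.measurable_sum _ fun k' _ => (measurable_Pim k k').mul (measurable_rrow ρ a i k'))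

lemma measurable_Tset (ρ s : ℝ) (b : EdgeT n → Bool) : MeasurableSet (Tset (n := n) d ρ s b) := by
  have h1 : MeasurableSet (Dgood n d) := by
    have : Dgood n d = ⋂ i, ⋂ j, {x : Fin n → Fin d → ℝ | 0 ≤ x i ⬝ᵥ x j ∧ x i ⬝ᵥ x j ≤ 1} := by
      ext x; simp [Dgood, Set.mem_iInter]
    rw [this]
    refine MeasurableSet.iInter fun i => MeasurableSet.iInter fun j => ?_
    exact (measurableSet_le measurable_const (measurable_dot i j)).inter
      (measurableSet_le (measurable_dot i j) measurable_const)
  have h2 : MeasurableSet {x : Fin n → Fin d → ℝ | ((xmat x)ᵀ * xmat x).det ≠ 0} := by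
    have : {x : Fin n → Fin d → ℝ | ((xmat x)ᵀ * xmat x).det ≠ 0}
        = (fun x : Fin n → Fin d → ℝ => ((xmat x)ᵀ * xmat x).det) ⁻¹' ({0}ᶜ) := rfl
    rw [this]
    exact measurable_Gdet (measurableSet_singleton 0).compl
  have h3 : MeasurableSet {x : Fin n → Fin d → ℝ | ∃ i, s < Qval ρ (aMat b) x i} := by
    have : {x : Fin n → Fin d → ℝ | ∃ i, s < Qval ρ (aMat b) x i}
        = ⋃ i, {x | s < Qval ρ (aMat b) x i} := by
      ext x; simp
    rw [this]
    exact MeasurableSet.iUnion fun i =>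
      measurableSet_lt measurable_const (measurable_Qval ρ (aMat b) i)
  exact (h1.inter (h2.inter h3))

end Measurability



set_option maxHeartbeats 1000000 in
lemma fixedx (ρ : ℝ) (hρ0 : 0 < ρ) (hρ1 : ρ ≤ 1) (x : Fin n → Fin d → ℝ)
    (τ s : ℝ) (hτ : 1 ≤ τ) (hs : s = d * τ ^ 2) :
    ∑ b : EdgeT n → Bool, Set.indicator (Tset d ρ s b) (fun _ => ∏ e, qE (prF ρ x) b e) x
      ≤ (n * d * 2) * Real.exp (-(τ - 1) ^ 2 / 2) := by
  classical
  have hRHS : (0:ℝ) ≤ (n * d * 2) * Real.exp (-(τ - 1) ^ 2 / 2) := by positivity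
  by_cases hx : x ∈ Dgood n d ∧ ((xmat x)ᵀ * xmat x).det ≠ 0
  swap
  · have hzero : ∀ b : EdgeT n → Bool,
        Set.indicator (Tset d ρ s b) (fun _ => ∏ e, qE (prF ρ x) b e) x = 0 := by
      intro b
      apply Set.indicator_of_notMem
      intro hmem
      exact hx ⟨hmem.1, hmem.2.1⟩
    have h0 : ∑ b : EdgeT n → Bool,
        Set.indicator (Tset d ρ s b) (fun _ => ∏ e, qE (prF ρ x) b e) x = 0 :=
      Finset.sum_eq_zero fun b _ => hzero b
    rw [h0]
    exact hRHS
  obtain ⟨hD, hdet⟩ := hx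
  obtain ⟨V, hV1, hV2⟩ := basisLA (xmat x) hdet
  have hq0 : ∀ i j, 0 ≤ prF ρ x i j := fun i j => mul_nonneg hρ0.le (hD i j).1
  have hq1 : ∀ i j, prF ρ x i j ≤ 1 := by
    intro i j
    calc ρ * (x i ⬝ᵥ x j) ≤ 1 * 1 :=
        mul_le_mul hρ1 (hD i j).2 (hD i j).1 zero_le_one
      _ = 1 := by ring
  have hsym : ∀ i j, prF ρ x i j = prF ρ x j i := by
    intro i j; unfold prF; rw [dotProduct_comm]
  have hτ0 : (0:ℝ) ≤ τ := le_trans zero_le_one hτ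
  -- pointwise bound by union of indicator events
  have hpt : ∀ b : EdgeT n → Bool,
      Set.indicator (Tset d ρ s b) (fun _ => ∏ e, qE (prF ρ x) b e) x
      ≤ ∑ i : Fin n, ∑ l : Fin d,
          (if (τ - 1) + 1 < |∑ k, (aMat b i k - prF ρ x i k) * (fun k => V k l) k|
            then ∏ e, qE (prF ρ x) b e else 0) := by
    intro b
    have hWnn : (0:ℝ) ≤ ∏ e, qE (prF ρ x) b e :=
      Finset.prod_nonneg fun e _ => qE_nonneg hq0 hq1 b e
    have hinnn : ∀ (i : Fin n) (l : Fin d), (0:ℝ) ≤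
        (if (τ - 1) + 1 < |∑ k, (aMat b i k - prF ρ x i k) * (fun k => V k l) k|
          then ∏ e, qE (prF ρ x) b e else 0) := by
      intro i l
      split
      · exact hWnn
      · exact le_refl 0
    by_cases hmem : x ∈ Tset d ρ s b
    swap
    · rw [Set.indicator_of_notMem hmem]
      exact Finset.sum_nonneg fun i _ => Finset.sum_nonneg fun l _ => hinnn i l
    rw [Set.indicator_of_mem hmem]
    have hmem' := hmem
    simp only [Tset, Set.mem_setOf_eq] at hmem'
    obtain ⟨-, -, i0, hQ⟩ := hmem' 
    -- decompose the quadratic form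
    have hQdecomp : Qval ρ (aMat b) x i0 = ∑ l, (∑ k, V k l * rrow ρ (aMat b) x i0 k) ^ 2 := by
      unfold Qval
      rw [← hV2, quad_decomp]
    have hl : ∃ l : Fin d, τ ^ 2 < (∑ k, V k l * rrow ρ (aMat b) x i0 k) ^ 2 := by
      by_contra hcon
      push_neg at hcon
      have : Qval ρ (aMat b) x i0 ≤ ∑ _l : Fin d, τ ^ 2 := by
        rw [hQdecomp]
        exact Finset.sum_le_sum fun l _ => hcon l
      rw [Finset.sum_const, Finset.card_univ, Fintype.card_fin, nsmul_eq_mul] at this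
      rw [hs] at hQ
      linarith
    obtain ⟨l0, hl0⟩ := hl
    have habs : τ < |∑ k, V k l0 * rrow ρ (aMat b) x i0 k| := by
      by_contra hcon
      push_neg at hcon
      have h1 : (∑ k, V k l0 * rrow ρ (aMat b) x i0 k) ^ 2 ≤ τ ^ 2 := by
        rw [← sq_abs]
        exact pow_le_pow_left₀ (abs_nonneg _) hcon 2
      linarith
    have hconv : ∑ k, (aMat b i0 k - prF ρ x i0 k) * (fun k => V k l0) k
        = ∑ k, V k l0 * rrow ρ (aMat b) x i0 k := by
      refine Finset.sum_congr rfl fun k _ => ?_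
      unfold rrow prF
      ring
    have hev : (τ - 1) + 1 < |∑ k, (aMat b i0 k - prF ρ x i0 k) * (fun k => V k l0) k| := by
      rw [hconv]
      linarith
    calc (∏ e, qE (prF ρ x) b e)
        = (if (τ - 1) + 1 < |∑ k, (aMat b i0 k - prF ρ x i0 k) * (fun k => V k l0) k|
            then ∏ e, qE (prF ρ x) b e else 0) := by rw [if_pos hev]
      _ ≤ ∑ l : Fin d,
          (if (τ - 1) + 1 < |∑ k, (aMat b i0 k - prF ρ x i0 k) * (fun k => V k l) k|
            then ∏ e, qE (prF ρ x) b e else 0) :=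
          Finset.single_le_sum (fun l _ => hinnn i0 l) (Finset.mem_univ l0)
      _ ≤ ∑ i : Fin n, ∑ l : Fin d,
          (if (τ - 1) + 1 < |∑ k, (aMat b i k - prF ρ x i k) * (fun k => V k l) k|
            then ∏ e, qE (prF ρ x) b e else 0) :=
          Finset.single_le_sum
            (fun i _ => Finset.sum_nonneg fun l _ => hinnn i l) (Finset.mem_univ i0)
  calc ∑ b : EdgeT n → Bool, Set.indicator (Tset d ρ s b) (fun _ => ∏ e, qE (prF ρ x) b e) x
      ≤ ∑ b : EdgeT n → Bool, ∑ i : Fin n, ∑ l : Fin d,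
          (if (τ - 1) + 1 < |∑ k, (aMat b i k - prF ρ x i k) * (fun k => V k l) k|
            then ∏ e, qE (prF ρ x) b e else 0) :=
        Finset.sum_le_sum fun b _ => hpt b
    _ = ∑ i : Fin n, ∑ l : Fin d, ∑ b : EdgeT n → Bool,
          (if (τ - 1) + 1 < |∑ k, (aMat b i k - prF ρ x i k) * (fun k => V k l) k|
            then ∏ e, qE (prF ρ x) b e else 0) := by
        rw [Finset.sum_comm]
        exact Finset.sum_congr rfl fun i _ => Finset.sum_comm
    _ ≤ ∑ _i : Fin n, ∑ _l : Fin d, 2 * Real.exp (-(τ - 1) ^ 2 / 2) := by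
        refine Finset.sum_le_sum fun i _ => Finset.sum_le_sum fun l _ => ?_
        have hvl : ∑ k, ((fun k => V k l) k) ^ 2 ≤ 1 := le_of_eq (colV_norm V hV1 l)
        exact chernoff_row (prF ρ x) hsym hq0 hq1 i (fun k => V k l) hvl (τ - 1)
          (by linarith)
    _ = (n * d * 2) * Real.exp (-(τ - 1) ^ 2 / 2) := by
        rw [Finset.sum_const, Finset.sum_const, Finset.card_univ, Finset.card_univ,
          Fintype.card_fin, Fintype.card_fin, smul_smul, nsmul_eq_mul]
        push_cast
        ring

lemma ofReal_prod_nonneg {ι : Type*} (s : Finset ι) (f : ι → ℝ) (h : ∀ i ∈ s, 0 ≤ f i) :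
    ENNReal.ofReal (∏ i ∈ s, f i) = ∏ i ∈ s, ENNReal.ofReal (f i) := by
  classical
  induction s using Finset.cons_induction with
  | empty => simp
  | cons a t hat ih =>
    rw [Finset.prod_cons, Finset.prod_cons,
      ENNReal.ofReal_mul (h a (Finset.mem_cons_self a t)),
      ih fun i hi => h i (Finset.mem_cons_of_mem hi)]

set_option maxHeartbeats 1000000 in
lemma fixedx_ennreal (ρ : ℝ) (hρ0 : 0 < ρ) (hρ1 : ρ ≤ 1) (x : Fin n → Fin d → ℝ)
    (τ s : ℝ) (hτ : 1 ≤ τ) (hs : s = d * τ ^ 2) :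
    ∑ b : EdgeT n → Bool,
      Set.indicator (Tset d ρ s b)
        (fun _ => ∏ e : EdgeT n, ENNReal.ofReal (qE (prF ρ x) b e)) x
      ≤ ENNReal.ofReal ((n * d * 2) * Real.exp (-(τ - 1) ^ 2 / 2)) := by
  classical
  have hterm : ∀ b : EdgeT n → Bool,
      Set.indicator (Tset d ρ s b)
        (fun _ => ∏ e : EdgeT n, ENNReal.ofReal (qE (prF ρ x) b e)) x
      = ENNReal.ofReal
        (Set.indicator (Tset d ρ s b) (fun _ => ∏ e, qE (prF ρ x) b e) x) := by
    intro b
    by_cases hmem : x ∈ Tset d ρ s b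
    · rw [Set.indicator_of_mem hmem, Set.indicator_of_mem hmem]
      have hD : x ∈ Dgood n d := hmem.1
      have hq0 : ∀ i j, 0 ≤ prF ρ x i j := fun i j => mul_nonneg hρ0.le (hD i j).1
      have hq1 : ∀ i j, prF ρ x i j ≤ 1 := by
        intro i j
        calc ρ * (x i ⬝ᵥ x j) ≤ 1 * 1 :=
            mul_le_mul hρ1 (hD i j).2 (hD i j).1 zero_le_one
          _ = 1 := by ring
      rw [ofReal_prod_nonneg _ _ fun e _ => qE_nonneg hq0 hq1 b e]
    · rw [Set.indicator_of_notMem hmem, Set.indicator_of_notMem hmem, ENNReal.ofReal_zero]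
  rw [Finset.sum_congr rfl fun b _ => hterm b]
  have hnn : ∀ b : EdgeT n → Bool,
      0 ≤ Set.indicator (Tset d ρ s b) (fun _ => ∏ e, qE (prF ρ x) b e) x := by
    intro b
    by_cases hmem : x ∈ Tset d ρ s b
    · rw [Set.indicator_of_mem hmem]
      have hD : x ∈ Dgood n d := hmem.1
      refine Finset.prod_nonneg fun e _ => qE_nonneg
        (fun i j => mul_nonneg hρ0.le (hD i j).1) (fun i j => ?_) b e
      calc ρ * (x i ⬝ᵥ x j) ≤ 1 * 1 :=
          mul_le_mul hρ1 (hD i j).2 (hD i j).1 zero_le_one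
        _ = 1 := by ring
    · rw [Set.indicator_of_notMem hmem]
  have hsum : ∑ b : EdgeT n → Bool,
      ENNReal.ofReal (Set.indicator (Tset d ρ s b) (fun _ => ∏ e, qE (prF ρ x) b e) x)
      = ENNReal.ofReal (∑ b : EdgeT n → Bool,
          Set.indicator (Tset d ρ s b) (fun _ => ∏ e, qE (prF ρ x) b e) x) :=
    (ENNReal.ofReal_sum_of_nonneg fun b _ => hnn b).symm
  rw [hsum]
  exact ENNReal.ofReal_le_ofReal (fixedx ρ hρ0 hρ1 x τ s hτ hs)

/-- continuity of the dot product pairing -/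
lemma continuous_pair_dot (d : ℕ) :
    Continuous fun q : (Fin d → ℝ) × (Fin d → ℝ) => q.1 ⬝ᵥ q.2 := by
  simp only [dotProduct]
  exact continuous_finset_sum _ fun l _ =>
    ((continuous_apply l).comp continuous_fst).mul ((continuous_apply l).comp continuous_snd)

open MeasureTheory in
lemma prod_null_of_ae_ae {d : ℕ} (F : MeasureTheory.Measure (Fin d → ℝ))
    [MeasureTheory.IsProbabilityMeasure F]
    (h : ∀ᵐ x ∂F, ∀ᵐ y ∂F, 0 ≤ x ⬝ᵥ y ∧ x ⬝ᵥ y ≤ 1) :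
    (F.prod F) {q : (Fin d → ℝ) × (Fin d → ℝ) | ¬ (0 ≤ q.1 ⬝ᵥ q.2 ∧ q.1 ⬝ᵥ q.2 ≤ 1)} = 0 := by
  have hCc : IsClosed {q : (Fin d → ℝ) × (Fin d → ℝ) | 0 ≤ q.1 ⬝ᵥ q.2 ∧ q.1 ⬝ᵥ q.2 ≤ 1} := by
    have : {q : (Fin d → ℝ) × (Fin d → ℝ) | 0 ≤ q.1 ⬝ᵥ q.2 ∧ q.1 ⬝ᵥ q.2 ≤ 1}
        = (fun q : (Fin d → ℝ) × (Fin d → ℝ) => q.1 ⬝ᵥ q.2) ⁻¹' (Set.Icc 0 1) := by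
      ext q; simp [Set.mem_Icc]
    rw [this]
    exact IsClosed.preimage (continuous_pair_dot d) isClosed_Icc
  have hmeas : MeasurableSet
      {q : (Fin d → ℝ) × (Fin d → ℝ) | ¬ (0 ≤ q.1 ⬝ᵥ q.2 ∧ q.1 ⬝ᵥ q.2 ≤ 1)} :=
    hCc.measurableSet.compl
  rw [MeasureTheory.Measure.measure_prod_null hmeas]
  filter_upwards [h] with x hx
  have heq : Prod.mk x ⁻¹' {q : (Fin d → ℝ) × (Fin d → ℝ) | ¬ (0 ≤ q.1 ⬝ᵥ q.2 ∧ q.1 ⬝ᵥ q.2 ≤ 1)}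
      = {y | ¬ (0 ≤ x ⬝ᵥ y ∧ x ⬝ᵥ y ≤ 1)} := rfl
  rw [heq]
  exact MeasureTheory.ae_iff.mp hx

open MeasureTheory in
lemma diag_null {d : ℕ} (F : MeasureTheory.Measure (Fin d → ℝ))
    [MeasureTheory.IsProbabilityMeasure F]
    (h : ∀ᵐ x ∂F, ∀ᵐ y ∂F, 0 ≤ x ⬝ᵥ y ∧ x ⬝ᵥ y ≤ 1) :
    F {x | ¬ (0 ≤ x ⬝ᵥ x ∧ x ⬝ᵥ x ≤ 1)} = 0 := by
  have hFF := prod_null_of_ae_ae F h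
  have hCc : IsClosed {q : (Fin d → ℝ) × (Fin d → ℝ) | 0 ≤ q.1 ⬝ᵥ q.2 ∧ q.1 ⬝ᵥ q.2 ≤ 1} := by
    have : {q : (Fin d → ℝ) × (Fin d → ℝ) | 0 ≤ q.1 ⬝ᵥ q.2 ∧ q.1 ⬝ᵥ q.2 ≤ 1}
        = (fun q : (Fin d → ℝ) × (Fin d → ℝ) => q.1 ⬝ᵥ q.2) ⁻¹' (Set.Icc 0 1) := by
      ext q; simp [Set.mem_Icc]
    rw [this]
    exact IsClosed.preimage (continuous_pair_dot d) isClosed_Icc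
  apply MeasureTheory.measure_null_of_locally_null
  intro x hx
  have hxx : (x, x) ∈ {q : (Fin d → ℝ) × (Fin d → ℝ) | ¬ (0 ≤ q.1 ⬝ᵥ q.2 ∧ q.1 ⬝ᵥ q.2 ≤ 1)} := hx
  have hopen : IsOpen {q : (Fin d → ℝ) × (Fin d → ℝ) | ¬ (0 ≤ q.1 ⬝ᵥ q.2 ∧ q.1 ⬝ᵥ q.2 ≤ 1)} := by
    have : {q : (Fin d → ℝ) × (Fin d → ℝ) | ¬ (0 ≤ q.1 ⬝ᵥ q.2 ∧ q.1 ⬝ᵥ q.2 ≤ 1)}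
        = {q : (Fin d → ℝ) × (Fin d → ℝ) | 0 ≤ q.1 ⬝ᵥ q.2 ∧ q.1 ⬝ᵥ q.2 ≤ 1}ᶜ := rfl
    rw [this]
    exact hCc.isOpen_compl
  obtain ⟨U, V, hU, hV, hxU, hxV, hUV⟩ := isOpen_prod_iff.mp hopen x x hxx
  refine ⟨(U ∩ V) ∩ {x | ¬ (0 ≤ x ⬝ᵥ x ∧ x ⬝ᵥ x ≤ 1)}, ?_, ?_⟩
  · exact Filter.inter_mem
      (mem_nhdsWithin_of_mem_nhds ((hU.inter hV).mem_nhds ⟨hxU, hxV⟩))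
      self_mem_nhdsWithin
  · have hprod : F (U ∩ V) * F (U ∩ V) = (F.prod F) ((U ∩ V) ×ˢ (U ∩ V)) := by
      rw [MeasureTheory.Measure.prod_prod]
    have hsub : ((U ∩ V) ×ˢ (U ∩ V)) ⊆
        {q : (Fin d → ℝ) × (Fin d → ℝ) | ¬ (0 ≤ q.1 ⬝ᵥ q.2 ∧ q.1 ⬝ᵥ q.2 ≤ 1)} := by
      rintro ⟨a, b⟩ ⟨⟨haU, _⟩, ⟨_, hbV⟩⟩
      exact hUV ⟨haU, hbV⟩
    have h0 : (F.prod F) ((U ∩ V) ×ˢ (U ∩ V)) = 0 :=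
      le_antisymm (hFF ▸ MeasureTheory.measure_mono hsub) zero_le
    have hUV0 : F (U ∩ V) = 0 := by
      have := hprod.trans h0
      rcases mul_eq_zero.mp this with h' | h' <;> exact h'
    exact le_antisymm
      (le_trans (MeasureTheory.measure_mono Set.inter_subset_left) hUV0.le) zero_le

/-- the final numeric estimate -/
lemma numeric_bound (c : ℝ) (hc : 0 < c) (d n : ℕ) (hd : 1 ≤ d) (hn1 : 1 ≤ n)
    (hL : 2 * (c + 1) + 2 * Real.log (2 * d) + 2 ≤ Real.log n) :
    (n * d * 2 : ℝ) *
      Real.exp (-((d + 1) * Real.log n / Real.sqrt d - 1) ^ 2 / 2) ≤ (n : ℝ) ^ (-c) := by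
  set L := Real.log n with hLdef
  have hd1 : (1:ℝ) ≤ (d:ℝ) := by exact_mod_cast hd
  have hlog2d : (0:ℝ) ≤ Real.log (2 * d) := by
    apply Real.log_nonneg
    nlinarith
  have hL4 : 4 ≤ L := by nlinarith
  have hL1 : 1 ≤ L := by linarith
  have hsq : Real.sqrt d ^ 2 = (d:ℝ) := Real.sq_sqrt (by positivity)
  have hsqpos : 0 < Real.sqrt d := Real.sqrt_pos.mpr (by linarith)
  have hsd : 2 * Real.sqrt d ≤ (d:ℝ) + 1 := by nlinarith [sq_nonneg (Real.sqrt d - 1)]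
  have hτ2L : 2 * L ≤ (d + 1) * L / Real.sqrt d := by
    rw [le_div_iff₀ hsqpos]
    nlinarith
  have hτ1L : L ≤ (d + 1) * L / Real.sqrt d - 1 := by linarith
  have hLnn : 0 ≤ L := by linarith
  have hexp : Real.exp (-((d + 1) * L / Real.sqrt d - 1) ^ 2 / 2) ≤ Real.exp (-L ^ 2 / 2) := by
    apply Real.exp_le_exp.mpr
    have : L ^ 2 ≤ ((d + 1) * L / Real.sqrt d - 1) ^ 2 := pow_le_pow_left₀ hLnn hτ1L 2
    linarith
  have hndpos : (0:ℝ) < n * d * 2 := by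
    have : (1:ℝ) ≤ (n:ℝ) := by exact_mod_cast hn1
    nlinarith
  have hlogn : Real.log ((n:ℝ) * d * 2) = L + Real.log d + Real.log 2 := by
    rw [Real.log_mul (by nlinarith) (by norm_num), Real.log_mul (by positivity) (by nlinarith)]
  have hlog2d' : Real.log (2 * d) = Real.log 2 + Real.log d := by
    rw [Real.log_mul (by norm_num) (by nlinarith)]
  have hkey : Real.log ((n:ℝ) * d * 2) + c * L ≤ L ^ 2 / 2 := by
    rw [hlogn]
    nlinarith [hlog2d, hlog2d', hL, hL1, hc.le]
  calc (n * d * 2 : ℝ) * Real.exp (-((d + 1) * L / Real.sqrt d - 1) ^ 2 / 2)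
      ≤ (n * d * 2 : ℝ) * Real.exp (-L ^ 2 / 2) :=
        mul_le_mul_of_nonneg_left hexp hndpos.le
    _ = Real.exp (Real.log ((n:ℝ) * d * 2) + -L ^ 2 / 2) := by
        rw [Real.exp_add, Real.exp_log hndpos]
    _ ≤ Real.exp (-(c * L)) := by
        apply Real.exp_le_exp.mpr
        linarith
    _ = (n : ℝ) ^ (-c) := by
        rw [Real.rpow_def_of_pos (by exact_mod_cast hn1 : (0:ℝ) < (n:ℝ))]
        congr 1
        ring

end RCEB

namespace RCEB

open Finset MeasureTheory

variable {n d : ℕ}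

lemma isAdjMat_aMat (b : EdgeT n → Bool) : IsAdjMat (Matrix.of (aMat b)) :=
  ⟨fun i j => aMat_symm b i j, fun i => aMat_diag b i, fun i j => by
    show aMat b i j = 0 ∨ aMat b i j = 1
    unfold aMat
    split_ifs <;> simp⟩

/-- booleans extracted from an adjacency matrix -/
def bOf (A : Fin n → Fin n → ℝ) : EdgeT n → Bool :=
  fun e => if A e.1.1 e.1.2 = 1 then true else false

lemma eq_aMat_bOf (A : Fin n → Fin n → ℝ) (h : IsAdjMat (Matrix.of A)) :
    A = aMat (bOf A) := by
  funext i j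
  have hsymm : ∀ i j, A i j = A j i := h.1
  have hdiag : ∀ i, A i i = 0 := h.2.1
  have h01 : ∀ i j, A i j = 0 ∨ A i j = 1 := h.2.2
  rcases lt_trichotomy i j with hij | hij | hij
  · unfold aMat bOf
    rw [dif_pos hij]
    rcases h01 i j with h0 | h1
    · rw [h0]; norm_num
    · rw [h1]; norm_num
  · subst hij
    rw [aMat_diag]
    exact hdiag i
  · unfold aMat bOf
    rw [dif_neg (asymm hij), dif_pos hij]
    rw [hsymm i j]
    rcases h01 j i with h0 | h1
    · rw [h0]; norm_num
    · rw [h1]; norm_num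

lemma prod_filter_eq (ρ : ℝ) (x : Fin n → Fin d → ℝ) (b : EdgeT n → Bool) :
    ∏ p ∈ Finset.univ.filter (fun p : Fin n × Fin n => p.1 < p.2),
      ENNReal.ofReal (if aMat b p.1 p.2 = 1 then ρ * (x p.1 ⬝ᵥ x p.2)
        else 1 - ρ * (x p.1 ⬝ᵥ x p.2))
    = ∏ e : EdgeT n, ENNReal.ofReal (qE (prF ρ x) b e) := by
  classical
  rw [Finset.prod_subtype (Finset.univ.filter fun p : Fin n × Fin n => p.1 < p.2)
    (p := fun p : Fin n × Fin n => p.1 < p.2) (fun p => by simp)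
    (fun p => ENNReal.ofReal (if aMat b p.1 p.2 = 1 then ρ * (x p.1 ⬝ᵥ x p.2)
        else 1 - ρ * (x p.1 ⬝ᵥ x p.2)))]
  refine Finset.prod_congr rfl fun e _ => ?_
  congr 1
  rw [aMat_edge b e]
  cases hbe : b e
  · simp only [hbe, if_false, qE, prF]
    norm_num
  · simp only [hbe, if_true, qE, prF]

lemma measurable_W (ρ : ℝ) (b : EdgeT n → Bool) :
    Measurable fun x : Fin n → Fin d → ℝ =>
      ∏ e : EdgeT n, ENNReal.ofReal (qE (prF ρ x) b e) := by
  refine Finset.measurable_prod _ fun e _ => Measurable.ennreal_ofReal ?_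
  unfold qE prF
  cases hbe : b e
  · norm_num
    exact measurable_const.sub ((measurable_dot e.1.1 e.1.2).const_mul ρ)
  · norm_num
    exact (measurable_dot e.1.1 e.1.2).const_mul ρ

lemma measurable_diagbad (d : ℕ) :
    MeasurableSet {x : Fin d → ℝ | ¬ (0 ≤ x ⬝ᵥ x ∧ x ⬝ᵥ x ≤ 1)} := by
  have hcont : Continuous fun x : Fin d → ℝ => x ⬝ᵥ x := by
    simp only [dotProduct]
    exact continuous_finset_sum _ fun l _ => (continuous_apply l).mul (continuous_apply l)
  have : {x : Fin d → ℝ | ¬ (0 ≤ x ⬝ᵥ x ∧ x ⬝ᵥ x ≤ 1)}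
      = ((fun x : Fin d → ℝ => x ⬝ᵥ x) ⁻¹' (Set.Icc 0 1))ᶜ := by
    ext q; simp [Set.mem_Icc]
  rw [this]
  exact (IsClosed.preimage hcont isClosed_Icc).measurableSet.compl

lemma measurable_pairbad (d : ℕ) :
    MeasurableSet {q : (Fin d → ℝ) × (Fin d → ℝ) | ¬ (0 ≤ q.1 ⬝ᵥ q.2 ∧ q.1 ⬝ᵥ q.2 ≤ 1)} := by
  have : {q : (Fin d → ℝ) × (Fin d → ℝ) | ¬ (0 ≤ q.1 ⬝ᵥ q.2 ∧ q.1 ⬝ᵥ q.2 ≤ 1)}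
      = ((fun q : (Fin d → ℝ) × (Fin d → ℝ) => q.1 ⬝ᵥ q.2) ⁻¹' (Set.Icc 0 1))ᶜ := by
    ext q; simp [Set.mem_Icc]
  rw [this]
  exact (IsClosed.preimage (continuous_pair_dot d) isClosed_Icc).measurableSet.compl

lemma model_null {Ω : Type} [MeasurableSpace Ω] {μ : Measure Ω} {d : ℕ}
    (M : RDPGModel Ω μ d) (n : ℕ) :
    μ {ω | M.X n ω ∉ Dgood n d} = 0 := by
  classical
  haveI := M.F_prob
  haveI := M.μ_prob
  have hsub : {ω | M.X n ω ∉ Dgood n d} ⊆ ⋃ i : Fin n, ⋃ j : Fin n,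
      {ω | ¬ (0 ≤ M.X n ω i ⬝ᵥ M.X n ω j ∧ M.X n ω i ⬝ᵥ M.X n ω j ≤ 1)} := by
    intro ω hω
    simp only [Dgood, Set.mem_setOf_eq, not_forall] at hω
    obtain ⟨i, j, hij⟩ := hω
    exact Set.mem_iUnion.mpr ⟨i, Set.mem_iUnion.mpr ⟨j, hij⟩⟩
  refine measure_mono_null hsub
    (measure_iUnion_null fun i => measure_iUnion_null fun j => ?_)
  by_cases hij : i = j
  · subst hij
    have hXm : Measurable fun ω => M.X n ω i := M.X_meas n i
    have heq : {ω | ¬ (0 ≤ M.X n ω i ⬝ᵥ M.X n ω i ∧ M.X n ω i ⬝ᵥ M.X n ω i ≤ 1)}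
        = (fun ω => M.X n ω i) ⁻¹' {x | ¬ (0 ≤ x ⬝ᵥ x ∧ x ⬝ᵥ x ≤ 1)} := rfl
    rw [heq, ← MeasureTheory.Measure.map_apply hXm (measurable_diagbad d), M.X_law n i]
    exact diag_null M.F M.F_inner
  · have hXi : Measurable fun ω => M.X n ω i := M.X_meas n i
    have hXj : Measurable fun ω => M.X n ω j := M.X_meas n j
    have hind := (M.X_indep n).indepFun hij
    have hmap : μ.map (fun ω => (M.X n ω i, M.X n ω j)) = M.F.prod M.F := by
      rw [(ProbabilityTheory.indepFun_iff_map_prod_eq_prod_map_map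
        hXi.aemeasurable hXj.aemeasurable).mp hind, M.X_law n i, M.X_law n j]
    have heq : {ω | ¬ (0 ≤ M.X n ω i ⬝ᵥ M.X n ω j ∧ M.X n ω i ⬝ᵥ M.X n ω j ≤ 1)}
        = (fun ω => (M.X n ω i, M.X n ω j)) ⁻¹'
          {q : (Fin d → ℝ) × (Fin d → ℝ) | ¬ (0 ≤ q.1 ⬝ᵥ q.2 ∧ q.1 ⬝ᵥ q.2 ≤ 1)} := rfl
    rw [heq, ← MeasureTheory.Measure.map_apply (hXi.prodMk hXj) (measurable_pairbad d), hmap]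
    exact prod_null_of_ae_ae M.F M.F_inner

end RCEB

/-- entrywise bound in the proof of Theorem 5 of the paper.
Let `(A, X) ∼ RDPG(F)` with sparsity factor `ρ_n` and let `u_j` denote the `j`-th column
of `U_P`.  Then asymptotically almost surely `max_j ‖(A − P) u_j‖_∞ = O(log n)`:
there is a fixed constant `C > 0` such that a.a.s. for every column `j` and every row `i`,
`|Σ_k (A_{ik} − P_{ik}) u_{jk}| ≤ C log n`. -/
theorem rdpg_column_entrywise_log_bound
    {Ω : Type} [MeasurableSpace Ω] (μ : Measure Ω) (d : ℕ)
    (M : RDPGModel Ω μ d) (hrank : M.secondMoment.rank = d) :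
    ∃ C : ℝ, 0 < C ∧ AAS μ (fun n =>
      {ω | ∀ (UP : Matrix (Fin n) (Fin d) ℝ) (ΛP : Fin d → ℝ),
        IsRankFact (M.P n ω) UP ΛP →
          ∀ (j : Fin d) (i : Fin n),
            |∑ k, (M.A n ω i k - M.P n ω i k) * UP k j| ≤ C * Real.log n}) := by
  classical
  haveI := M.μ_prob
  rcases Nat.eq_zero_or_pos d with hd0 | hdpos
  · -- degenerate case d = 0 : the event is trivially everything
    refine ⟨1, one_pos, fun c hc => ⟨1, fun n hn η hη1 hη2 => ?_⟩⟩
    have hE : {ω | ∀ (UP : Matrix (Fin n) (Fin d) ℝ) (ΛP : Fin d → ℝ),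
        IsRankFact (M.P n ω) UP ΛP → ∀ (j : Fin d) (i : Fin n),
          |∑ k, (M.A n ω i k - M.P n ω i k) * UP k j| ≤ 1 * Real.log n} = Set.univ := by
      ext ω
      simp only [Set.mem_setOf_eq, Set.mem_univ, iff_true]
      intro UP ΛP _ j i
      have := j.isLt
      omega
    show 1 - ENNReal.ofReal η ≤ μ {ω | ∀ (UP : Matrix (Fin n) (Fin d) ℝ) (ΛP : Fin d → ℝ),
        IsRankFact (M.P n ω) UP ΛP → ∀ (j : Fin d) (i : Fin n),
          |∑ k, (M.A n ω i k - M.P n ω i k) * UP k j| ≤ 1 * Real.log n}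
    rw [hE, measure_univ]
    exact tsub_le_self
  -- main case d ≥ 1
  have hd1 : (1:ℝ) ≤ (d:ℝ) := by exact_mod_cast hdpos
  refine ⟨(d:ℝ) + 1, by positivity, fun c hc => ?_⟩
  refine ⟨max 3 ⌈Real.exp (2*(c+1) + 2*Real.log (2*d) + 2)⌉₊,
    fun n hn η hη1 hη2 => ?_⟩
  have hρ0 := M.ρ_pos n
  have hρ1 := M.ρ_le_one n
  have hn3 : 3 < n := lt_of_le_of_lt (le_max_left _ _) hn
  have hn1 : 1 ≤ n := by omega
  have hceil : ⌈Real.exp (2*(c+1) + 2*Real.log (2*d) + 2)⌉₊ < n :=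
    lt_of_le_of_lt (le_max_right _ _) hn
  have hexpB : Real.exp (2*(c+1) + 2*Real.log (2*d) + 2) ≤ (n:ℝ) :=
    le_trans (Nat.le_ceil _) (by exact_mod_cast hceil.le)
  have hLB : 2*(c+1) + 2*Real.log (2*d) + 2 ≤ Real.log n := by
    rw [← Real.log_exp (2*(c+1) + 2*Real.log (2*d) + 2)]
    exact Real.log_le_log (Real.exp_pos _) hexpB
  have hlog2d : (0:ℝ) ≤ Real.log (2*d) := Real.log_nonneg (by nlinarith)
  have hL4 : 4 ≤ Real.log n := by nlinarith
  have hsqpos : 0 < Real.sqrt d := Real.sqrt_pos.mpr (by linarith)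
  have hsq : Real.sqrt d ^ 2 = (d:ℝ) := Real.sq_sqrt (by positivity)
  have hdne : (d:ℝ) ≠ 0 := by linarith
  have hτ2L : 2 * Real.log n ≤ ((d:ℝ) + 1) * Real.log n / Real.sqrt d := by
    rw [le_div_iff₀ hsqpos]
    nlinarith [sq_nonneg (Real.sqrt d - 1)]
  have hτ1 : 1 ≤ ((d:ℝ) + 1) * Real.log n / Real.sqrt d := by nlinarith
  have hs_eq : (((d:ℝ) + 1) * Real.log n) ^ 2
      = (d:ℝ) * (((d:ℝ) + 1) * Real.log n / Real.sqrt d) ^ 2 := by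
    rw [div_pow, hsq]
    field_simp
  have hXmeas : Measurable fun ω => M.X n ω := measurable_pi_lambda _ (M.X_meas n)
  set E := {ω | ∀ (UP : Matrix (Fin n) (Fin d) ℝ) (ΛP : Fin d → ℝ),
      IsRankFact (M.P n ω) UP ΛP → ∀ (j : Fin d) (i : Fin n),
        |∑ k, (M.A n ω i k - M.P n ω i k) * UP k j| ≤ ((d:ℝ) + 1) * Real.log n}
    with hEdef
  have hBadBound : μ Eᶜ ≤ ENNReal.ofReal η := by
    -- inclusion of the bad event
    have hEc : Eᶜ ⊆ {ω | M.X n ω ∉ RCEB.Dgood n d} ∪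
        ⋃ b : RCEB.EdgeT n → Bool,
          {ω | M.X n ω ∈ RCEB.Tset d (M.ρ n) ((((d:ℝ)+1) * Real.log n)^2) b ∧
            M.A n ω = RCEB.aMat b} := by
      intro ω hω
      by_cases hDg : M.X n ω ∈ RCEB.Dgood n d
      swap
      · exact Or.inl hDg
      right
      simp only [hEdef, Set.mem_compl_iff, Set.mem_setOf_eq] at hω
      push_neg at hω
      obtain ⟨UP, ΛP, hRF, j, i, hviol⟩ := hω
      have hA : M.A n ω = RCEB.aMat (RCEB.bOf (M.A n ω)) :=
        RCEB.eq_aMat_bOf _ (M.A_adj n ω)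
      have hPmat : M.P n ω = M.ρ n • (RCEB.xmat (M.X n ω) * (RCEB.xmat (M.X n ω))ᵀ) := by
        ext a bb
        simp [RDPGModel.P, RCEB.xmat, Matrix.mul_apply, Matrix.smul_apply,
          dotProduct, smul_eq_mul, Matrix.transpose_apply, Matrix.of_apply,
          Finset.mul_sum]
      have hkey := RCEB.keyLA (RCEB.xmat (M.X n ω)) (M.ρ n) UP ΛP hRF.1
        (by rw [← hPmat]; exact hRF.2.1) (fun j' => ne_of_gt (hRF.2.2 j'))
      have hCL : (0:ℝ) ≤ ((d:ℝ)+1) * Real.log n := by nlinarith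
      have hsum_eq : ∑ k, (M.A n ω i k - M.P n ω i k) * UP k j
          = RCEB.rrow (M.ρ n) (M.A n ω) (M.X n ω) i ⬝ᵥ (fun k => UP k j) := by
        simp only [dotProduct, RCEB.rrow, RDPGModel.P, Matrix.of_apply]
      have h2 := hkey.2 j (RCEB.rrow (M.ρ n) (M.A n ω) (M.X n ω) i)
      have hlt : (((d:ℝ)+1) * Real.log n) ^ 2
          < (RCEB.rrow (M.ρ n) (M.A n ω) (M.X n ω) i ⬝ᵥ (fun k => UP k j)) ^ 2 := by
        rw [← hsum_eq, ← sq_abs (∑ k, (M.A n ω i k - M.P n ω i k) * UP k j)]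
        exact pow_lt_pow_left₀ hviol hCL two_ne_zero
      refine Set.mem_iUnion.mpr ⟨RCEB.bOf (M.A n ω), ⟨hDg, hkey.1, i, ?_⟩, hA⟩
      show (((d:ℝ)+1) * Real.log n) ^ 2
        < RCEB.Qval (M.ρ n) (RCEB.aMat (RCEB.bOf (M.A n ω))) (M.X n ω) i
      unfold RCEB.Qval
      rw [← hA]
      exact lt_of_lt_of_le hlt h2
    have hμN : μ {ω | M.X n ω ∉ RCEB.Dgood n d} = 0 := RCEB.model_null M n
    have hTmeas : ∀ b : RCEB.EdgeT n → Bool,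
        MeasurableSet (RCEB.Tset d (M.ρ n) ((((d:ℝ)+1) * Real.log n)^2) b) :=
      fun b => RCEB.measurable_Tset _ _ b
    have hcond : ∀ b : RCEB.EdgeT n → Bool,
        μ {ω | M.X n ω ∈ RCEB.Tset d (M.ρ n) ((((d:ℝ)+1) * Real.log n)^2) b ∧
            M.A n ω = RCEB.aMat b}
        = ∫⁻ ω, Set.indicator (RCEB.Tset d (M.ρ n) ((((d:ℝ)+1) * Real.log n)^2) b)
            (fun x => ∏ e : RCEB.EdgeT n, ENNReal.ofReal (RCEB.qE (RCEB.prF (M.ρ n) x) b e))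
            (M.X n ω) ∂μ := by
      intro b
      rw [M.A_cond n (RCEB.aMat b) (RCEB.isAdjMat_aMat b) _ (hTmeas b)]
      have hstep1 : ∫⁻ ω in {ω | M.X n ω ∈ RCEB.Tset d (M.ρ n) ((((d:ℝ)+1) * Real.log n)^2) b},
          ∏ p ∈ Finset.univ.filter (fun p : Fin n × Fin n => p.1 < p.2),
            ENNReal.ofReal (if RCEB.aMat b p.1 p.2 = 1
              then M.ρ n * (M.X n ω p.1 ⬝ᵥ M.X n ω p.2)
              else 1 - M.ρ n * (M.X n ω p.1 ⬝ᵥ M.X n ω p.2)) ∂μ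
          = ∫⁻ ω in {ω | M.X n ω ∈ RCEB.Tset d (M.ρ n) ((((d:ℝ)+1) * Real.log n)^2) b},
            (∏ e : RCEB.EdgeT n,
              ENNReal.ofReal (RCEB.qE (RCEB.prF (M.ρ n) (M.X n ω)) b e)) ∂μ :=
        MeasureTheory.lintegral_congr fun ω => RCEB.prod_filter_eq (M.ρ n) (M.X n ω) b
      rw [hstep1]
      have hpre : MeasurableSet {ω | M.X n ω ∈
          RCEB.Tset d (M.ρ n) ((((d:ℝ)+1) * Real.log n)^2) b} := hXmeas (hTmeas b)
      rw [← MeasureTheory.lintegral_indicator hpre]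
      refine MeasureTheory.lintegral_congr fun ω => ?_
      by_cases hmem : M.X n ω ∈ RCEB.Tset d (M.ρ n) ((((d:ℝ)+1) * Real.log n)^2) b
      · rw [Set.indicator_of_mem hmem, Set.indicator_of_mem (by exact hmem)]
      · rw [Set.indicator_of_notMem hmem, Set.indicator_of_notMem (by exact hmem)]
    calc μ Eᶜ ≤ μ ({ω | M.X n ω ∉ RCEB.Dgood n d} ∪
          ⋃ b : RCEB.EdgeT n → Bool,
            {ω | M.X n ω ∈ RCEB.Tset d (M.ρ n) ((((d:ℝ)+1) * Real.log n)^2) b ∧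
              M.A n ω = RCEB.aMat b}) := measure_mono hEc
      _ ≤ μ {ω | M.X n ω ∉ RCEB.Dgood n d} + μ (⋃ b : RCEB.EdgeT n → Bool,
            {ω | M.X n ω ∈ RCEB.Tset d (M.ρ n) ((((d:ℝ)+1) * Real.log n)^2) b ∧
              M.A n ω = RCEB.aMat b}) := measure_union_le _ _
      _ = μ (⋃ b : RCEB.EdgeT n → Bool,
            {ω | M.X n ω ∈ RCEB.Tset d (M.ρ n) ((((d:ℝ)+1) * Real.log n)^2) b ∧
              M.A n ω = RCEB.aMat b}) := by rw [hμN, zero_add]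
      _ ≤ ∑' b : RCEB.EdgeT n → Bool,
            μ {ω | M.X n ω ∈ RCEB.Tset d (M.ρ n) ((((d:ℝ)+1) * Real.log n)^2) b ∧
              M.A n ω = RCEB.aMat b} := measure_iUnion_le _
      _ = ∑ b : RCEB.EdgeT n → Bool,
            μ {ω | M.X n ω ∈ RCEB.Tset d (M.ρ n) ((((d:ℝ)+1) * Real.log n)^2) b ∧
              M.A n ω = RCEB.aMat b} := tsum_fintype _
      _ = ∑ b : RCEB.EdgeT n → Bool,
            ∫⁻ ω, Set.indicator (RCEB.Tset d (M.ρ n) ((((d:ℝ)+1) * Real.log n)^2) b)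
              (fun x => ∏ e : RCEB.EdgeT n,
                ENNReal.ofReal (RCEB.qE (RCEB.prF (M.ρ n) x) b e)) (M.X n ω) ∂μ :=
          Finset.sum_congr rfl fun b _ => hcond b
      _ = ∫⁻ ω, ∑ b : RCEB.EdgeT n → Bool,
            Set.indicator (RCEB.Tset d (M.ρ n) ((((d:ℝ)+1) * Real.log n)^2) b)
              (fun x => ∏ e : RCEB.EdgeT n,
                ENNReal.ofReal (RCEB.qE (RCEB.prF (M.ρ n) x) b e)) (M.X n ω) ∂μ := by
          rw [MeasureTheory.lintegral_finset_sum]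
          intro b _
          exact ((RCEB.measurable_W (M.ρ n) b).indicator (hTmeas b)).comp hXmeas
      _ ≤ ∫⁻ _ω, ENNReal.ofReal ((n * d * 2) *
            Real.exp (-(((d:ℝ) + 1) * Real.log n / Real.sqrt d - 1) ^ 2 / 2)) ∂μ := by
          apply MeasureTheory.lintegral_mono
          intro ω
          dsimp only
          have hptwse : ∀ b : RCEB.EdgeT n → Bool,
              Set.indicator (RCEB.Tset d (M.ρ n) ((((d:ℝ)+1) * Real.log n)^2) b)
                (fun x => ∏ e : RCEB.EdgeT n,
                  ENNReal.ofReal (RCEB.qE (RCEB.prF (M.ρ n) x) b e)) (M.X n ω)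
              = Set.indicator (RCEB.Tset d (M.ρ n) ((((d:ℝ)+1) * Real.log n)^2) b)
                (fun _ => ∏ e : RCEB.EdgeT n,
                  ENNReal.ofReal (RCEB.qE (RCEB.prF (M.ρ n) (M.X n ω)) b e)) (M.X n ω) := by
            intro b
            by_cases hmem : M.X n ω ∈ RCEB.Tset d (M.ρ n) ((((d:ℝ)+1) * Real.log n)^2) b
            · rw [Set.indicator_of_mem hmem, Set.indicator_of_mem hmem]
            · rw [Set.indicator_of_notMem hmem, Set.indicator_of_notMem hmem]
          rw [Finset.sum_congr rfl fun b _ => hptwse b]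
          exact RCEB.fixedx_ennreal (M.ρ n) hρ0 hρ1 (M.X n ω)
            (((d:ℝ) + 1) * Real.log n / Real.sqrt d) ((((d:ℝ)+1) * Real.log n)^2)
            hτ1 hs_eq
      _ = ENNReal.ofReal ((n * d * 2) *
            Real.exp (-(((d:ℝ) + 1) * Real.log n / Real.sqrt d - 1) ^ 2 / 2)) := by
          rw [MeasureTheory.lintegral_const, measure_univ, mul_one]
      _ ≤ ENNReal.ofReal ((n:ℝ) ^ (-c)) :=
          ENNReal.ofReal_le_ofReal (RCEB.numeric_bound c hc d n hdpos hn1 hLB)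
      _ ≤ ENNReal.ofReal η := ENNReal.ofReal_le_ofReal hη1.le
  rw [tsub_le_iff_right]
  calc (1:ℝ≥0∞) = μ Set.univ := measure_univ.symm
    _ = μ (E ∪ Eᶜ) := by rw [Set.union_compl_self]
    _ ≤ μ E + μ Eᶜ := measure_union_le E Eᶜ
    _ ≤ μ E + ENNReal.ofReal η := add_le_add_right hBadBound _
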